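/- Let A ∈ Mat_N(ℤ) with single eigenvalue λ ∈ ℤ, λ < -1, non-diagonalizable, largest Jordan block size ℓ+1, and π = φ_{(A-λI)^ℓ}. Then for all P ∈ 𝔾_m^N(ℚ̄), ĥ_A⁺(P) = max{h(π(P)), h(π(P)^{-1})}/(ℓ!·|λ|^ℓ). -/

import Mathlib

open Filter NumberField IsDedekindDomain
open scoped Classical

noncomputable section

/-- The logarithm of the normalized absolute value of `a` at the finite place `v` of the
number field `K`:  `log ‖a‖_v = -(additive valuation of a) * log (norm of v)`. -/
def finVal (K : Type*) [Field K] [NumberField K]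
    (v : HeightOneSpectrum (𝓞 K)) (a : K) : ℝ :=
  if h : a = 0 then 0
  else (Multiplicative.toAdd (WithZero.unzero ((v.valuation K).ne_zero_iff.mpr h)) : ℤ) *
    Real.log (Ideal.absNorm v.asIdeal)

/-- The absolute logarithmic Weil height of a tuple of elements of a number field `K`:
`h(P) = Σ_{v ∈ M_K} max {0, log ‖x₁‖_v, …, log ‖x_N‖_v}` with suitably normalized
absolute values. -/
def logHeight (K : Type*) [Field K] [NumberField K] {N : ℕ} (x : Fin N → K) : ℝ :=
  (Module.finrank ℚ K : ℝ)⁻¹ *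
    ((∑ w : InfinitePlace K, (w.mult : ℝ) * ⨆ i, max 0 (Real.log (w (x i)))) +
     ∑ᶠ v : HeightOneSpectrum (𝓞 K), ⨆ i, max 0 (finVal K v (x i)))

/-- The height of a point of `𝔾_m^N(K)`. -/
def uHeight (K : Type*) [Field K] [NumberField K] {N : ℕ} (x : Fin N → Kˣ) : ℝ :=
  logHeight K (fun i => (x i : K))

/-- The monomial map associated to an integer matrix `A`:
`φ_A(x₁,…,x_N) = (∏ x_j^{a_{1j}}, …, ∏ x_j^{a_{Nj}})`. -/
def phi {G : Type*} [CommGroup G] {N : ℕ} (A : Matrix (Fin N) (Fin N) ℤ)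
    (x : Fin N → G) : Fin N → G :=
  fun i => ∏ j, (x j) ^ (A i j)

/-!
For a real exponent matrix `M`, the height of the formal point `x ^ M` (`monomialHeight`) is a
continuous, positively homogeneous function of `M` which agrees with `uHeight K (phi B x)` when
`B` is an integer matrix: each place contributes the positive part of `M` applied to the vector of
local logarithms of `x`. By the binomial theorem, `(λ + 𝒩)ⁿ / (n^ℓ λⁿ) → 𝒩^ℓ / (ℓ! λ^ℓ)`, and
since `λ < 0`, the matrices `Aⁿ / (n^ℓ |λ|ⁿ)` converge to `±𝒩^ℓ / (ℓ! λ^ℓ)` along even and odd `n`.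
Hence the limsup of the normalized heights is the larger of the heights of these two limits.
-/

open Topology Asymptotics Matrix

section MonomialMap

variable {G : Type*} [CommGroup G] {N : ℕ}

lemma ofMul_phi (B : Matrix (Fin N) (Fin N) ℤ) (x : Fin N → G) (i : Fin N) :
    Additive.ofMul (phi B x i) = ∑ j, B i j • Additive.ofMul (x j) := by
  simp [phi, ofMul_prod, ofMul_zpow]

lemma phi_one (x : Fin N → G) : phi 1 x = x := by
  funext i
  simp [phi, Matrix.one_apply]

lemma phi_mul (B C : Matrix (Fin N) (Fin N) ℤ) (x : Fin N → G) :
    phi (B * C) x = phi B (phi C x) := by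
  funext i
  apply Additive.ofMul.injective
  simp only [ofMul_phi, Matrix.mul_apply, Finset.sum_smul, Finset.smul_sum, mul_smul]
  exact Finset.sum_comm

lemma phi_iterate (B : Matrix (Fin N) (Fin N) ℤ) (x : Fin N → G) (n : ℕ) :
    (phi B)^[n] x = phi (B ^ n) x := by
  induction n with
  | zero => simp [phi_one]
  | succ n ih => rw [Function.iterate_succ_apply', ih, ← phi_mul, ← pow_succ']

lemma phi_neg (B : Matrix (Fin N) (Fin N) ℤ) (x : Fin N → G) :
    phi (-B) x = (phi B x)⁻¹ := by
  funext i
  simp [phi]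

lemma map_phi (g : Additive G →+ ℝ) (B : Matrix (Fin N) (Fin N) ℤ) (x : Fin N → G) :
    (fun i => g (.ofMul (phi B x i))) =
      (Int.castRingHom ℝ).mapMatrix B *ᵥ fun j => g (.ofMul (x j)) := by
  funext i
  simp [ofMul_phi, mulVec, dotProduct]

end MonomialMap

lemma tendsto_choose_div_pow_of_lt {k ℓ : ℕ} (h : k < ℓ) :
    Tendsto (fun n : ℕ => (n.choose k : ℝ) / (n : ℝ) ^ ℓ) atTop (𝓝 0) :=
  ((isTheta_choose k).isBigO.trans_isLittleO ((isLittleO_pow_pow_atTop_of_lt h).comp_tendsto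
    tendsto_natCast_atTop_atTop)).tendsto_div_nhds_zero

lemma tendsto_choose_div_pow (ℓ : ℕ) :
    Tendsto (fun n : ℕ => (n.choose ℓ : ℝ) / (n : ℝ) ^ ℓ) atTop (𝓝 (ℓ.factorial : ℝ)⁻¹) := by
  have h := (isEquivalent_choose ℓ).div (IsEquivalent.refl (u := fun n : ℕ => (n : ℝ) ^ ℓ))
  refine (h.tendsto_nhds_iff.mpr (tendsto_const_nhds.congr' ?_))
  filter_upwards [eventually_ne_atTop 0] with n hn
  simp only [Pi.div_apply]
  field_simp

section JordanBlock

variable {R : Type*} [Ring R] [Algebra ℝ R] {X : R} {ℓ : ℕ}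

lemma algebraMap_add_pow_eq_sum (hX : X ^ (ℓ + 1) = 0) (a : ℝ) {n : ℕ} (hn : ℓ ≤ n) :
    (algebraMap ℝ R a + X) ^ n =
      ∑ k ∈ Finset.range (ℓ + 1), (n.choose k * a ^ (n - k)) • X ^ k := by
  rw [add_comm, Commute.add_pow (Algebra.commutes a X).symm,
    ← Finset.sum_subset (Finset.range_subset_range.mpr (by omega : ℓ + 1 ≤ n + 1))]
  · refine Finset.sum_congr rfl fun k _ => ?_
    rw [mul_assoc, ← Nat.cast_comm, ← map_pow, ← map_natCast (algebraMap ℝ R), ← map_mul,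
      ← Algebra.commutes, Algebra.smul_def]
  · intro k _ hk
    simp [pow_eq_zero_of_le (by simpa using hk) hX]

lemma tendsto_algebraMap_add_pow_div [TopologicalSpace R] [ContinuousAdd R] [ContinuousSMul ℝ R]
    (hX : X ^ (ℓ + 1) = 0) {a : ℝ} (ha : a ≠ 0) :
    Tendsto (fun n : ℕ => ((n : ℝ) ^ ℓ * a ^ n)⁻¹ • (algebraMap ℝ R a + X) ^ n) atTop
      (𝓝 (((ℓ.factorial : ℝ) * a ^ ℓ)⁻¹ • X ^ ℓ)) := by
  set c : ℕ → ℕ → ℝ := fun n k => (n.choose k : ℝ) / (n : ℝ) ^ ℓ * (a ^ k)⁻¹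
  have hexpand : ∀ n ≥ ℓ, ((n : ℝ) ^ ℓ * a ^ n)⁻¹ • (algebraMap ℝ R a + X) ^ n =
      ∑ k ∈ Finset.range ℓ, c n k • X ^ k + c n ℓ • X ^ ℓ := by
    intro n hn
    rw [algebraMap_add_pow_eq_sum hX a hn, Finset.smul_sum, Finset.sum_range_succ]
    have hcoeff : ∀ k ≤ n, ((n : ℝ) ^ ℓ * a ^ n)⁻¹ * (n.choose k * a ^ (n - k)) = c n k := by
      intro k hk
      simp only [c, pow_sub₀ a ha hk]
      field_simp
    congr 1
    · refine Finset.sum_congr rfl fun k hk => ?_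
      rw [smul_smul, hcoeff k ((Finset.mem_range.mp hk).le.trans hn)]
    · rw [smul_smul, hcoeff ℓ hn]
  have hlower : Tendsto (fun n => ∑ k ∈ Finset.range ℓ, c n k • X ^ k) atTop (𝓝 0) := by
    simpa using tendsto_finsetSum (Finset.range ℓ) fun k hk =>
      ((tendsto_choose_div_pow_of_lt (Finset.mem_range.mp hk)).mul_const (a ^ k)⁻¹).smul_const
        (X ^ k)
  have htop := ((tendsto_choose_div_pow ℓ).mul_const (a ^ ℓ)⁻¹).smul_const (X ^ ℓ)
  rw [mul_inv, ← zero_add (_ • X ^ ℓ)]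
  exact (hlower.add htop).congr' ((eventually_ge_atTop ℓ).mono fun n hn => (hexpand n hn).symm)

end JordanBlock

lemma atTop_eq_map_two_mul_sup_map_two_mul_add_one :
    (atTop : Filter ℕ) = map (2 * ·) atTop ⊔ map (2 * · + 1) atTop := by
  refine le_antisymm (fun s hs => ?_) (sup_le ?_ ?_)
  · obtain ⟨⟨a, ha⟩, ⟨b, hb⟩⟩ := (mem_sup.mp hs).imp mem_atTop_sets.mp mem_atTop_sets.mp
    refine mem_atTop_sets.mpr ⟨2 * (a + b) + 1, fun n hn => ?_⟩
    obtain ⟨k, rfl | rfl⟩ := Nat.even_or_odd' n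
    exacts [ha k (by omega), hb k (by omega)]
  · exact tendsto_atTop_mono (fun k => show k ≤ 2 * k by omega) tendsto_id
  · exact tendsto_atTop_mono (fun k => show k ≤ 2 * k + 1 by omega) tendsto_id

lemma limsup_eq_max_of_tendsto_even_odd {f : ℕ → ℝ} {a b : ℝ}
    (h₀ : Tendsto (fun k => f (2 * k)) atTop (𝓝 a))
    (h₁ : Tendsto (fun k => f (2 * k + 1)) atTop (𝓝 b)) :
    limsup f atTop = max a b := by
  -- `ℝ` is not a complete lattice: split the limsup over the two parity filters in `EReal`.
  have hmono := EReal.coe_strictMono.monotone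
  rw [atTop_eq_map_two_mul_sup_map_two_mul_add_one]
  have hbdd : IsBoundedUnder (· ≤ ·) (map (2 * ·) atTop ⊔ map (2 * · + 1) atTop) f :=
    isBounded_sup h₀.isBoundedUnder_le h₁.isBoundedUnder_le
  have hcobdd : IsCoboundedUnder (· ≤ ·) (map (2 * ·) atTop ⊔ map (2 * · + 1) atTop) f :=
    IsBoundedUnder.isCoboundedUnder_le (isBounded_sup h₀.isBoundedUnder_ge h₁.isBoundedUnder_ge)
  apply EReal.coe_injective
  rw [hmono.map_limsup_of_continuousAt f continuous_coe_real_ereal.continuousAt hbdd hcobdd,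
    limsup_sup_filter, hmono.map_max]
  exact congr_arg₂ max ((continuous_coe_real_ereal.tendsto a).comp h₀).limsup_eq
    ((continuous_coe_real_ereal.tendsto b).comp h₁).limsup_eq

lemma limsup_comp_neg_one_pow_smul {E : Type*} [TopologicalSpace E] [AddCommGroup E] [Module ℝ E]
    [ContinuousNeg E] {F : E → ℝ} (hF : Continuous F) {T : ℕ → E} {L : E}
    (hT : Tendsto T atTop (𝓝 L)) :
    limsup (fun n => F ((-1 : ℝ) ^ n • T n)) atTop = max (F L) (F (-L)) := by
  have heven : Tendsto (fun k => (-1 : ℝ) ^ (2 * k) • T (2 * k)) atTop (𝓝 L) :=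
    (hT.comp (tendsto_atTop_mono (fun k => show k ≤ 2 * k by omega) tendsto_id)).congr
      fun k => by rw [(even_two_mul k).neg_one_pow, one_smul]; rfl
  have hodd : Tendsto (fun k => (-1 : ℝ) ^ (2 * k + 1) • T (2 * k + 1)) atTop (𝓝 (-L)) :=
    (hT.comp (tendsto_atTop_mono (fun k => show k ≤ 2 * k + 1 by omega) tendsto_id)).neg.congr
      fun k => by rw [(odd_two_mul_add_one k).neg_one_pow, neg_one_smul]; rfl
  exact limsup_eq_max_of_tendsto_even_odd (f := fun n => F ((-1 : ℝ) ^ n • T n))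
    ((hF.tendsto L).comp heven) ((hF.tendsto (-L)).comp hodd)

section Heights

variable {K : Type*} [Field K] [NumberField K] {N : ℕ}

lemma finVal_eq_zero_of_valuation_eq_one (v : HeightOneSpectrum (𝓞 K)) {a : K}
    (h : v.valuation K a = 1) : finVal K v a = 0 := by
  have ha : a ≠ 0 := by rintro rfl; simp at h
  have h1 : WithZero.unzero ((v.valuation K).ne_zero_iff.mpr ha) = 1 := by
    rw [← WithZero.coe_inj, WithZero.coe_unzero, h, WithZero.coe_one]
  simp [finVal, ha, h1]

lemma finVal_mul (v : HeightOneSpectrum (𝓞 K)) {a b : K} (ha : a ≠ 0) (hb : b ≠ 0) :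
    finVal K v (a * b) = finVal K v a + finVal K v b := by
  have h : WithZero.unzero ((v.valuation K).ne_zero_iff.mpr (mul_ne_zero ha hb)) =
      WithZero.unzero ((v.valuation K).ne_zero_iff.mpr ha) *
        WithZero.unzero ((v.valuation K).ne_zero_iff.mpr hb) := by
    simp only [← WithZero.coe_inj, WithZero.coe_mul, WithZero.coe_unzero, map_mul]
  simp only [finVal, dif_neg (mul_ne_zero ha hb), dif_neg ha, dif_neg hb, h, toAdd_mul]
  push_cast
  ring

lemma finite_setOf_finVal_ne_zero (a : K) :
    {v : HeightOneSpectrum (𝓞 K) | finVal K v a ≠ 0}.Finite := by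
  refine ((HeightOneSpectrum.Support.finite (𝓞 K) a).union
    (HeightOneSpectrum.Support.finite (𝓞 K) a⁻¹)).subset fun v hv => ?_
  have ha : a ≠ 0 := by rintro rfl; simp [finVal] at hv
  rcases Ne.lt_or_gt (mt (finVal_eq_zero_of_valuation_eq_one v) hv) with h | h
  · right
    change 1 < v.valuation K a⁻¹
    rwa [map_inv₀, one_lt_inv₀ (zero_lt_iff.mpr ((v.valuation K).ne_zero_iff.mpr ha))]
  · exact Or.inl h

def logAbsHom (w : InfinitePlace K) : Additive Kˣ →+ ℝ :=
  AddMonoidHom.mk' (fun u => Real.log (w (u.toMul : K))) fun u u' => by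
    simp [Real.log_mul]

def finValHom (v : HeightOneSpectrum (𝓞 K)) : Additive Kˣ →+ ℝ :=
  AddMonoidHom.mk' (fun u => finVal K v (u.toMul : K)) fun u u' =>
    finVal_mul v u.toMul.ne_zero u'.toMul.ne_zero

lemma iSup_max_zero_eq_norm_posPart {ι : Type*} [Fintype ι] (t : ι → ℝ) :
    ⨆ i, max 0 (t i) = ‖t⁺‖ := by
  rw [← coe_nnnorm, Pi.nnnorm_def, Finset.sup_univ_eq_ciSup, NNReal.coe_iSup]
  congr 1
  funext i
  simp [Pi.posPart_apply, posPart_def, max_comm, abs_of_nonneg]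

/-- In the sup norm, `‖t⁺‖ = max 0 (max_i t i)` is the local term of `logHeight`. -/
def monomialHeight (x : Fin N → Kˣ) (M : Matrix (Fin N) (Fin N) ℝ) : ℝ :=
  (Module.finrank ℚ K : ℝ)⁻¹ *
    ((∑ w : InfinitePlace K, (w.mult : ℝ) * ‖(M *ᵥ fun j => Real.log (w (x j : K)))⁺‖) +
     ∑ᶠ v : HeightOneSpectrum (𝓞 K), ‖(M *ᵥ fun j => finVal K v (x j : K))⁺‖)

lemma uHeight_phi (x : Fin N → Kˣ) (B : Matrix (Fin N) (Fin N) ℤ) :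
    uHeight K (phi B x) = monomialHeight x ((Int.castRingHom ℝ).mapMatrix B) := by
  have hinf := fun w => map_phi (logAbsHom w) B x
  have hfin := fun v => map_phi (finValHom (K := K) v) B x
  simp only [logAbsHom, finValHom, AddMonoidHom.mk'_apply, toMul_ofMul] at hinf hfin
  simp only [uHeight, logHeight, monomialHeight, iSup_max_zero_eq_norm_posPart, hinf, hfin]

lemma exists_monomialHeight_eq_sum (x : Fin N → Kˣ) :
    ∃ S : Finset (HeightOneSpectrum (𝓞 K)), ∀ M, monomialHeight x M =
      (Module.finrank ℚ K : ℝ)⁻¹ *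
        ((∑ w : InfinitePlace K, (w.mult : ℝ) * ‖(M *ᵥ fun j => Real.log (w (x j : K)))⁺‖) +
         ∑ v ∈ S, ‖(M *ᵥ fun j => finVal K v (x j : K))⁺‖) := by
  have hS := Set.finite_iUnion fun j => finite_setOf_finVal_ne_zero (x j : K)
  refine ⟨hS.toFinset, fun M => ?_⟩
  rw [monomialHeight, finsum_eq_sum_of_support_subset]
  intro v hv
  contrapose! hv
  have hzero : (fun j => finVal K v (x j : K)) = 0 := by
    funext j
    by_contra h
    exact hv (hS.mem_toFinset.mpr (Set.mem_iUnion.mpr ⟨j, h⟩))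
  simp [hzero]

lemma continuous_monomialHeight (x : Fin N → Kˣ) : Continuous (monomialHeight x) := by
  obtain ⟨S, hS⟩ := exists_monomialHeight_eq_sum x
  have hterm : ∀ t : Fin N → ℝ, Continuous fun M : Matrix (Fin N) (Fin N) ℝ => ‖(M *ᵥ t)⁺‖ :=
    fun t => (continuous_pi fun i => ((continuous_apply i).comp
      (continuous_id.matrix_mulVec continuous_const)).max continuous_const).norm
  rw [funext hS]
  fun_prop

lemma monomialHeight_smul (x : Fin N → Kˣ) {c : ℝ} (hc : 0 ≤ c) (M : Matrix (Fin N) (Fin N) ℝ) :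
    monomialHeight x (c • M) = c * monomialHeight x M := by
  obtain ⟨S, hS⟩ := exists_monomialHeight_eq_sum x
  have hpos : ∀ t : Fin N → ℝ, ‖((c • M) *ᵥ t)⁺‖ = c * ‖(M *ᵥ t)⁺‖ := by
    intro t
    have hsmul : (c • M *ᵥ t)⁺ = c • (M *ᵥ t)⁺ := by
      ext i
      simp [Pi.posPart_apply, posPart_def, mul_max_of_nonneg _ _ hc]
    rw [smul_mulVec, hsmul, norm_smul, Real.norm_of_nonneg hc]
  simp only [hS, hpos, ← Finset.mul_sum, ← mul_left_comm c]
  ring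

lemma max_monomialHeight_smul (x : Fin N → Kˣ) (r : ℝ) (M : Matrix (Fin N) (Fin N) ℝ) :
    max (monomialHeight x (r • M)) (monomialHeight x (-(r • M))) =
      |r| * max (monomialHeight x M) (monomialHeight x (-M)) := by
  rcases le_total 0 r with hr | hr
  · rw [← smul_neg, monomialHeight_smul x hr, monomialHeight_smul x hr, abs_of_nonneg hr,
      mul_max_of_nonneg _ _ hr]
  · have hneg : r • M = |r| • -M := by rw [abs_of_nonpos hr, neg_smul_neg]
    rw [hneg, ← smul_neg, neg_neg, monomialHeight_smul x (abs_nonneg r),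
      monomialHeight_smul x (abs_nonneg r), ← mul_max_of_nonneg _ _ (abs_nonneg r), max_comm]

end Heights

theorem statement17_general {N : ℕ} (lam : ℤ) (hlam : lam < -1)
    (Nc : Matrix (Fin N) (Fin N) ℤ) (ℓ : ℕ)
    (hnil : Nc ^ (ℓ + 1) = 0)
    (A : Matrix (Fin N) (Fin N) ℤ)
    (hA : A = lam • (1 : Matrix (Fin N) (Fin N) ℤ) + Nc)
    (K : Type*) [Field K] [NumberField K] (P : Fin N → Kˣ) :
    Filter.limsup
      (fun n : ℕ => uHeight K ((phi A)^[n] P) / ((n : ℝ) ^ ℓ * |(lam : ℝ)| ^ n))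
      Filter.atTop
    = max (uHeight K (phi (Nc ^ ℓ) P)) (uHeight K ((phi (Nc ^ ℓ) P)⁻¹)) /
        ((ℓ.factorial : ℝ) * |(lam : ℝ)| ^ ℓ) := by
  have hlam0 : (lam : ℝ) < 0 := by exact_mod_cast hlam.trans (by norm_num)
  set cast := (Int.castRingHom ℝ).mapMatrix (m := Fin N)
  set L : Matrix (Fin N) (Fin N) ℝ := (((ℓ.factorial : ℝ) * (lam : ℝ) ^ ℓ)⁻¹ • cast (Nc ^ ℓ))
  set T : ℕ → Matrix (Fin N) (Fin N) ℝ := fun n => ((n : ℝ) ^ ℓ * (lam : ℝ) ^ n)⁻¹ • cast (A ^ n)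
  have hjordan : Tendsto T atTop (𝓝 L) := by
    have hAR : cast A = algebraMap ℝ _ (lam : ℝ) + cast Nc := by
      rw [hA, map_add, map_zsmul, map_one, Algebra.algebraMap_eq_smul_one, Int.cast_smul_eq_zsmul]
    have hnilR : cast Nc ^ (ℓ + 1) = 0 := by rw [← map_pow, hnil, map_zero]
    simpa only [T, map_pow, hAR, L] using tendsto_algebraMap_add_pow_div hnilR hlam0.ne
  have hseq : ∀ n : ℕ, uHeight K ((phi A)^[n] P) / ((n : ℝ) ^ ℓ * |(lam : ℝ)| ^ n) =
      monomialHeight P ((-1 : ℝ) ^ n • T n) := by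
    intro n
    have hsign : ((-1 : ℝ) ^ n)⁻¹ = (-1) ^ n := by rw [← inv_pow, inv_neg_one]
    rw [phi_iterate, uHeight_phi, div_eq_inv_mul, ← monomialHeight_smul P (by positivity),
      smul_smul, abs_of_neg hlam0, neg_pow, mul_left_comm, mul_inv, hsign]
  rw [funext hseq, limsup_comp_neg_one_pow_smul (continuous_monomialHeight P) hjordan,
    max_monomialHeight_smul, ← map_neg, ← uHeight_phi, ← uHeight_phi, phi_neg, abs_inv, abs_mul,
    abs_pow, Nat.abs_cast, div_eq_inv_mul]

/-- For A = λI + 𝒩 with integer λ < -1, 𝒩^{ℓ+1} = 0 ≠ 𝒩^ℓ, and π = φ_{(A-λI)^ℓ}: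
ĥ_A⁺(P) = limsup h(φ_A^n(P))/(n^ℓ·|λ|ⁿ) = max{h(π(P)), h(π(P)⁻¹)}/(ℓ!·|λ|^ℓ). -/
theorem statement17 {N : ℕ} (lam : ℤ) (hlam : lam < -1)
    (Nc : Matrix (Fin N) (Fin N) ℤ) (ℓ : ℕ) (hℓ : 1 ≤ ℓ)
    (hnil : Nc ^ (ℓ + 1) = 0) (hne : Nc ^ ℓ ≠ 0)
    (A : Matrix (Fin N) (Fin N) ℤ)
    (hA : A = lam • (1 : Matrix (Fin N) (Fin N) ℤ) + Nc)
    (K : Type*) [Field K] [NumberField K] (P : Fin N → Kˣ) :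
    Filter.limsup
      (fun n : ℕ => uHeight K ((phi A)^[n] P) / ((n : ℝ) ^ ℓ * |(lam : ℝ)| ^ n))
      Filter.atTop
    = max (uHeight K (phi (Nc ^ ℓ) P)) (uHeight K ((phi (Nc ^ ℓ) P)⁻¹)) /
        ((ℓ.factorial : ℝ) * |(lam : ℝ)| ^ ℓ) :=
  statement17_general lam hlam Nc ℓ hnil A hA K P
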